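/- Let * be the backwards Laver operation on nonnegative integers and π(p) the period of p. For every p ≥ 1, π(p) ≤ 2^{bit(p-1)}, where bit(m) is the number of ones in the binary expansion of m. -/

import Mathlib

def LaverAxioms (N : ℕ) (star : ℕ → ℕ → ℕ) : Prop :=
  (∀ p q, p ∈ Set.Icc 1 N → q ∈ Set.Icc 1 N → star p q ∈ Set.Icc 1 N) ∧
  (∀ p ∈ Set.Icc 1 N, star p 1 = p % N + 1) ∧
  (∀ p q, p ∈ Set.Icc 1 N → q ∈ Set.Icc 1 N →
    star p (star q 1) = star (star p q) (star p 1))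

/-- `bstar` is the backwards Laver operation:
p * q = 2^n - ((2^n - p) ⋆ₙ (2^n - q)) for any n with p, q < 2^n. -/
def IsBackLaver (bstar : ℕ → ℕ → ℕ) : Prop :=
  ∀ n (star : ℕ → ℕ → ℕ), LaverAxioms (2 ^ n) star →
    ∀ p q, p < 2 ^ n → q < 2 ^ n →
      bstar p q = 2 ^ n - star (2 ^ n - p) (2 ^ n - q)

def lav (N : ℕ) : ℕ → ℕ → ℕ
  | p, q =>
    if h : N ≤ p then q
    else if q ≤ 1 then p + 1
    else lav N (max (lav N p (q-1)) (p+1)) (p+1)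
  termination_by p q => (N - p, q)
  decreasing_by
  · apply Prod.Lex.right; omega
  · apply Prod.Lex.left
    have h2 : ∀ a : ℕ, N - (a ⊔ (p+1)) < N - p := by
      intro a; have := Nat.le_max_right a (p+1); omega
    apply h2

lemma lav_ge (N p q : ℕ) (h : N ≤ p) : lav N p q = q := by
  rw [lav]; simp [h]

lemma lav_one' (N p q : ℕ) (h : p < N) (hq : q ≤ 1) : lav N p q = p + 1 := by
  rw [lav]; simp only [Nat.not_le.mpr h, dite_false, if_pos hq, dif_neg (by omega : ¬ N ≤ p)]

lemma lav_step (N p q : ℕ) (h : p < N) (hq : 2 ≤ q) :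
    lav N p q = lav N (max (lav N p (q-1)) (p+1)) (p+1) := by
  conv_lhs => rw [lav]
  simp only [dif_neg (by omega : ¬ N ≤ p), if_neg (by omega : ¬ q ≤ 1)]

lemma lav_gt (N : ℕ) : ∀ k p, N - p ≤ k → p < N → ∀ q, p < lav N p q := by
  intro k
  induction k with
  | zero => intro p hk hp; omega
  | succ k ih =>
    intro p hk hp q
    rcases le_or_gt q 1 with hq | hq
    · rw [lav_one' N p q hp hq]; omega
    · rw [lav_step N p q hp hq]
      set r := max (lav N p (q-1)) (p+1) with hr
      have hr1 : p + 1 ≤ r := le_max_right _ _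
      rcases le_or_gt N r with h1 | h1
      · rw [lav_ge N r _ h1]; omega
      · have := ih r (by omega) h1 (p+1); omega

lemma lav_rec (N p q : ℕ) (hp : p < N) (hq : 1 ≤ q) :
    lav N p (q+1) = lav N (lav N p q) (p+1) := by
  rw [lav_step N p (q+1) hp (by omega)]
  have h1 : p + 1 ≤ lav N p (q+1-1) := lav_gt N (N-p) p le_rfl hp _
  rw [max_eq_left (by simpa using h1)]
  norm_num

lemma lav_le (N : ℕ) : ∀ k p, N - p ≤ k → ∀ q, 1 ≤ q → q ≤ N → lav N p q ≤ N := by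
  intro k
  induction k with
  | zero =>
    intro p hk q h1 h2
    rw [lav_ge N p q (by omega)]; exact h2
  | succ k ih =>
    intro p hk q h1 h2
    rcases le_or_gt N p with hp | hp
    · rw [lav_ge N p q hp]; exact h2
    · revert h1 h2
      induction q with
      | zero => omega
      | succ q ihq =>
        intro h1 h2
        rcases Nat.eq_or_lt_of_le h1 with h1' | h1'
        · rw [lav_one' N p _ hp (by omega)]; omega
        · rw [lav_rec N p q hp (by omega)]
          have hr : p < lav N p q := lav_gt N (k+1) p hk hp q
          have hrN : lav N p q ≤ N := ihq (by omega) (by omega)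
          rcases Nat.eq_or_lt_of_le hrN with h3 | h3
          · rw [h3, lav_ge N N (p+1) le_rfl]; omega
          · exact ih (lav N p q) (by omega) (p+1) (by omega) (by omega)

lemma lav_reach (N p : ℕ) (hp : p < N) : ∃ q, (1 ≤ q ∧ lav N p q = N) ∧ q ≤ N - p := by
  by_contra hcon
  push_neg at hcon
  have key : ∀ j, j + 1 ≤ N - p → p + 1 + j ≤ lav N p (j+1) := by
    intro j
    induction j with
    | zero => intro _; rw [lav_one' N p 1 hp le_rfl]
    | succ j ih =>
      intro hj
      have h1 := ih (by omega)
      have h2 : lav N p (j+1) ≠ N := fun h => by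
        have := hcon (j+1) ⟨by omega, h⟩; omega
      have h3 : lav N p (j+1) ≤ N := lav_le N (N-p) p le_rfl (j+1) (by omega) (by omega)
      rw [lav_rec N p (j+1) hp (by omega)]
      have h4 : lav N p (j+1) < lav N (lav N p (j+1)) (p+1) :=
        lav_gt N N _ (by omega) (by omega) _
      omega
  have h5 := key (N - p - 1) (by omega)
  have h6 : lav N p (N-p) ≤ N := lav_le N (N-p) p le_rfl (N-p) (by omega) (by omega)
  have h7 : lav N p (N-p) ≠ N := fun h => by
    have := hcon (N-p) ⟨by omega, h⟩; omega
  have : N - p - 1 + 1 = N - p := by omega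
  rw [this] at h5
  omega

noncomputable def piL (N p : ℕ) : ℕ := sInf {q | 1 ≤ q ∧ lav N p q = N}

lemma piL_spec (N p : ℕ) (hp : p < N) : 1 ≤ piL N p ∧ lav N p (piL N p) = N := by
  obtain ⟨q, hq, _⟩ := lav_reach N p hp
  exact Nat.sInf_mem (s := {q | 1 ≤ q ∧ lav N p q = N}) ⟨q, hq⟩

lemma piL_le (N p : ℕ) (hp : p < N) : piL N p ≤ N - p := by
  obtain ⟨q, hq, hq2⟩ := lav_reach N p hp
  exact le_trans (Nat.sInf_le hq) hq2

lemma piL_min (N p q : ℕ) (h1 : 1 ≤ q) (h2 : q < piL N p) : lav N p q ≠ N := by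
  intro h
  exact Nat.notMem_of_lt_sInf h2 ⟨h1, h⟩

/-- strict monotonicity below the period -/
lemma lav_mono (N p : ℕ) (hp : p < N) :
    ∀ b a, 1 ≤ a → a < b → b ≤ piL N p → lav N p a < lav N p b := by
  intro b
  induction b with
  | zero => omega
  | succ b ih =>
    intro a h1 h2 h3
    have hb1 : 1 ≤ b := by omega
    have hstep : lav N p b < lav N p (b+1) := by
      have hbN : lav N p b ≠ N := piL_min N p b hb1 (by omega)
      have hble : lav N p b ≤ N := lav_le N (N-p) p le_rfl b hb1 (by
        have := piL_le N p hp; omega)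
      rw [lav_rec N p b hp hb1]
      exact lav_gt N N _ (by omega) (by omega) _
    rcases Nat.eq_or_lt_of_le (by omega : a ≤ b) with h4 | h4
    · rw [h4]; exact hstep
    · exact lt_trans (ih a h1 (by omega) (by omega)) hstep

lemma lav_period (N p : ℕ) (hp : p < N) :
    ∀ j, 1 ≤ j → lav N p (j + piL N p) = lav N p j := by
  obtain ⟨hpi1, hpiN⟩ := piL_spec N p hp
  intro j
  induction j with
  | zero => omega
  | succ j ih =>
    intro _
    rcases Nat.eq_zero_or_pos j with hj | hj
    · subst hj
      have : 1 + piL N p = piL N p + 1 := by omega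
      rw [this, lav_rec N p (piL N p) hp hpi1, hpiN, lav_ge N N (p+1) le_rfl,
        lav_one' N p 1 hp le_rfl]
    · have : j + 1 + piL N p = (j + piL N p) + 1 := by omega
      rw [this, lav_rec N p (j + piL N p) hp (by omega), ih hj,
        ← lav_rec N p j hp hj]

lemma lav_period_mul (N p : ℕ) (hp : p < N) :
    ∀ k j, 1 ≤ j → lav N p (j + k * piL N p) = lav N p j := by
  intro k
  induction k with
  | zero => intro j hj; norm_num
  | succ k ih =>
    intro j hj
    have : j + (k+1) * piL N p = (j + k * piL N p) + piL N p := by ring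
    rw [this, lav_period N p hp _ (by omega), ih j hj]

lemma lav_eq_top_of_dvd (N p q : ℕ) (hp : p < N) (h1 : 1 ≤ q) (hd : piL N p ∣ q) :
    lav N p q = N := by
  obtain ⟨hpi1, hpiN⟩ := piL_spec N p hp
  obtain ⟨k, rfl⟩ := hd
  cases k with
  | zero => omega
  | succ k =>
    have : piL N p * (k+1) = piL N p + k * piL N p := by ring
    rw [this, lav_period_mul N p hp k _ hpi1, hpiN]

lemma lav_dvd_of_eq_top (N p : ℕ) (hp : p < N) :
    ∀ q, 1 ≤ q → lav N p q = N → piL N p ∣ q := by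
  intro q
  induction q using Nat.strong_induction_on with
  | _ q ih =>
    intro h1 htop
    rcases lt_trichotomy q (piL N p) with h | h | h
    · exact absurd htop (piL_min N p q h1 h)
    · exact h ▸ dvd_refl _
    · obtain ⟨hpi1, hpiN⟩ := piL_spec N p hp
      have hq' : q - piL N p + piL N p = q := by omega
      have : lav N p (q - piL N p) = N := by
        rw [← lav_period N p hp (q - piL N p) (by omega), hq', htop]
      have hd := ih (q - piL N p) (by omega) (by omega) this
      have hq2 : q = (q - piL N p) + piL N p := by omega
      rw [hq2]
      exact dvd_add hd dvd_rfl

lemma pred_mod (N a : ℕ) (hN : 0 < N) (ha : 1 ≤ a) :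
    (a - 1) % N = if a % N = 0 then N - 1 else a % N - 1 := by
  have hdm := Nat.div_add_mod a N
  have hmod : a % N < N := Nat.mod_lt _ hN
  split_ifs with h
  · obtain ⟨k, hk⟩ : N ∣ a := Nat.dvd_of_mod_eq_zero h
    cases k with
    | zero => omega
    | succ k =>
      have h2 : a - 1 = N * k + (N - 1) := by rw [hk, Nat.mul_succ]; omega
      rw [h2, Nat.mul_add_mod, Nat.mod_eq_of_lt (by omega)]
  · have h2 : a - 1 = N * (a / N) + (a % N - 1) := by omega
    rw [h2, Nat.mul_add_mod, Nat.mod_eq_of_lt (by omega)]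

lemma sub1_mod (N a b : ℕ) (hN : 0 < N) (ha : 1 ≤ a) (hb : 1 ≤ b)
    (h : a % N = b % N) : (a - 1) % N = (b - 1) % N := by
  rw [pred_mod N a hN ha, pred_mod N b hN hb, h]

def barL (N x : ℕ) : ℕ := (x - 1) % N + 1

lemma barL_pos (N x : ℕ) : 1 ≤ barL N x := by unfold barL; omega

lemma barL_le (N x : ℕ) (hN : 0 < N) : barL N x ≤ N := by
  have := Nat.mod_lt (x-1) hN; unfold barL; omega

lemma barL_mod (N x : ℕ) (hN : 0 < N) (hx : 1 ≤ x) : barL N x % N = x % N := by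
  unfold barL
  rw [pred_mod N x hN hx]
  have hmod : x % N < N := Nat.mod_lt _ hN
  split_ifs with h
  · have : N - 1 + 1 = N := by omega
    rw [this, Nat.mod_self, h]
  · have : x % N - 1 + 1 = x % N := by omega
    rw [this, Nat.mod_eq_of_lt hmod]

lemma mod_inj_Icc (N a b : ℕ) (ha1 : 1 ≤ a) (ha2 : a ≤ N) (hb1 : 1 ≤ b) (hb2 : b ≤ N)
    (h : a % N = b % N) : a = b := by
  rcases Nat.eq_or_lt_of_le ha2 with h1 | h1 <;> rcases Nat.eq_or_lt_of_le hb2 with h2 | h2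
  · omega
  · rw [h1, Nat.mod_self, Nat.mod_eq_of_lt h2] at h; omega
  · rw [h2, Nat.mod_self, Nat.mod_eq_of_lt h1] at h; omega
  · rw [Nat.mod_eq_of_lt h1, Nat.mod_eq_of_lt h2] at h; omega

lemma barL_eq (N x y : ℕ) (hN : 0 < N) (hx : 1 ≤ x) (hy1 : 1 ≤ y) (hy2 : y ≤ N)
    (h : x % N = y % N) : barL N x = y := by
  apply mod_inj_Icc N _ _ (barL_pos N x) (barL_le N x hN) hy1 hy2
  rw [barL_mod N x hN hx, h]

lemma lav_range (N p q : ℕ) (hp1 : 1 ≤ p) (hp2 : p ≤ N) (hq1 : 1 ≤ q) (hq2 : q ≤ N) :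
    1 ≤ lav N p q ∧ lav N p q ≤ N := by
  rcases Nat.eq_or_lt_of_le hp2 with h | h
  · rw [h, lav_ge N N q le_rfl]; omega
  · exact ⟨by have := lav_gt N (N-p) p le_rfl h q; omega,
      lav_le N (N-p) p le_rfl q hq1 hq2⟩

lemma lav_top (N p : ℕ) (hN : 0 < N) (hF7 : ∀ p, 1 ≤ p → p < N → piL N p ∣ N)
    (h1 : 1 ≤ p) (h2 : p ≤ N) : lav N p N = N := by
  rcases Nat.eq_or_lt_of_le h2 with h | h
  · rw [h, lav_ge N N N le_rfl]
  · exact lav_eq_top_of_dvd N p N h (by omega) (hF7 p h1 h)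

lemma barL_top (N : ℕ) (hN : 0 < N) : barL N (2*N) = N :=
  barL_eq N (2*N) N hN (by omega) hN le_rfl (by
    simp [Nat.mul_mod_left, Nat.mod_self])

lemma succ_mod_eq (N a b : ℕ) (h : a % N = b % N) : (a+1) % N = (b+1) % N := by
  rw [Nat.add_mod, h, ← Nat.add_mod]

lemma lav_proj (N : ℕ) (hN : 0 < N)
    (hF7 : ∀ p, 1 ≤ p → p < N → piL N p ∣ N) :
    ∀ k p, 2*N - p ≤ k → 1 ≤ p → p ≤ 2*N → ∀ q, 1 ≤ q → q ≤ 2*N →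
      lav (2*N) p q % N = lav N (barL N p) (barL N q) % N := by
  have top_case : ∀ p q, p = 2*N → 1 ≤ q →
      lav (2*N) p q % N = lav N (barL N p) (barL N q) % N := by
    intro p q hp hq
    subst hp
    rw [lav_ge (2*N) _ q le_rfl, barL_top N hN, lav_ge N N _ le_rfl,
      barL_mod N q hN hq]
  have base_case : ∀ p, 1 ≤ p → p < 2*N →
      lav (2*N) p 1 % N = lav N (barL N p) (barL N 1) % N := by
    intro p hp1 hp2
    have hb1 : barL N 1 = 1 := by unfold barL; simp
    rw [lav_one' (2*N) p 1 hp2 le_rfl, hb1]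
    have hPb2 : barL N p ≤ N := barL_le N p hN
    have hmodp : barL N p % N = p % N := barL_mod N p hN hp1
    rcases Nat.eq_or_lt_of_le hPb2 with hP | hP
    · rw [hP, lav_ge N N 1 le_rfl]
      have h0 : p % N = 0 := by rw [← hmodp, hP, Nat.mod_self]
      have : (0:ℕ) % N = p % N := by rw [h0, Nat.zero_mod]
      have := succ_mod_eq N p 0 this.symm
      simpa using this
    · rw [lav_one' N (barL N p) 1 hP le_rfl]
      exact succ_mod_eq N p (barL N p) hmodp.symm
  intro k
  induction k with
  | zero =>
    intro p hk hp1 hp2 q hq1 hq2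
    exact top_case p q (by omega) hq1
  | succ k ih =>
    intro p hk hp1 hp2 q hq1 hq2
    rcases Nat.eq_or_lt_of_le hp2 with hp | hp
    · exact top_case p q hp hq1
    · revert hq1 hq2
      induction q with
      | zero => omega
      | succ q ihq =>
        intro hq1 hq2
        rcases Nat.eq_zero_or_pos q with rfl | hq0
        · exact base_case p hp1 hp
        · have ihq' := ihq (by omega) (by omega)
          set r := lav (2*N) p q with hrdef
          have hr_gt : p < r := lav_gt (2*N) (2*N-p) p le_rfl hp q
          have hr_le : r ≤ 2*N := lav_le (2*N) (2*N-p) p le_rfl q hq0 (by omega)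
          set Pb := barL N p with hPbdef
          set Qb := barL N q with hQbdef
          set rb := lav N Pb Qb with hrbdef
          have hPb1 : 1 ≤ Pb := barL_pos N p
          have hPb2 : Pb ≤ N := barL_le N p hN
          have hQb1 : 1 ≤ Qb := barL_pos N q
          have hQb2 : Qb ≤ N := barL_le N q hN
          have hrb_range : 1 ≤ rb ∧ rb ≤ N := lav_range N Pb Qb hPb1 hPb2 hQb1 hQb2
          have hbar_r : barL N r = rb :=
            barL_eq N r rb hN (by omega) hrb_range.1 hrb_range.2 ihq'
          have hmodp : Pb % N = p % N := barL_mod N p hN hp1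
          have hmodq : Qb % N = q % N := barL_mod N q hN hq0
          rw [lav_rec (2*N) p q hp hq0, ← hrdef]
          have hbp1 : barL N (p+1) % N = (p+1) % N := barL_mod N (p+1) hN (by omega)
          have key : lav N Pb (barL N (q+1)) % N = lav N rb (barL N (p+1)) % N := by
            rcases Nat.eq_or_lt_of_le hPb2 with hP | hP
            · -- Pb = N
              have hrb : rb = Qb := by rw [hrbdef, hP, lav_ge N N Qb le_rfl]
              have hp0 : p % N = 0 := by rw [← hmodp, hP, Nat.mod_self]
              have hbarp1 : barL N (p+1) = 1 := by
                apply barL_eq N (p+1) 1 hN (by omega) le_rfl hN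
                have : (0:ℕ) % N = p % N := by rw [hp0, Nat.zero_mod]
                have := succ_mod_eq N p 0 this.symm
                simpa using this
              rw [hP, lav_ge N N _ le_rfl, hrb, hbarp1]
              have hbq1 : barL N (q+1) % N = (q+1) % N := barL_mod N (q+1) hN (by omega)
              rcases Nat.eq_or_lt_of_le hQb2 with hQ | hQ
              · rw [lav_ge N Qb 1 (by omega), hbq1]
                have hq0' : q % N = 0 := by rw [← hmodq, hQ, Nat.mod_self]
                have : (0:ℕ) % N = q % N := by rw [hq0', Nat.zero_mod]
                have := succ_mod_eq N q 0 this.symm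
                simpa using this
              · rw [lav_one' N Qb 1 hQ le_rfl, hbq1]
                exact succ_mod_eq N q Qb hmodq.symm
            · -- Pb < N
              have hbarp1 : barL N (p+1) = Pb + 1 := by
                apply barL_eq N (p+1) (Pb+1) hN (by omega) (by omega) (by omega)
                exact succ_mod_eq N p Pb hmodp.symm
              rw [hbarp1]
              rcases Nat.eq_or_lt_of_le hQb2 with hQ | hQ
              · have hrb : rb = N := by rw [hrbdef, hQ]; exact lav_top N Pb hN hF7 hPb1 (by omega)
                have hq0' : q % N = 0 := by rw [← hmodq, hQ, Nat.mod_self]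
                have hbarq1 : barL N (q+1) = 1 := by
                  apply barL_eq N (q+1) 1 hN (by omega) le_rfl hN
                  have : (0:ℕ) % N = q % N := by rw [hq0', Nat.zero_mod]
                  have := succ_mod_eq N q 0 this.symm
                  simpa using this
                rw [hbarq1, hrb, lav_ge N N _ le_rfl, lav_one' N Pb 1 hP le_rfl]
              · have hbarq1 : barL N (q+1) = Qb + 1 := by
                  apply barL_eq N (q+1) (Qb+1) hN (by omega) (by omega) (by omega)
                  exact succ_mod_eq N q Qb hmodq.symm
                rw [hbarq1, lav_rec N Pb Qb hP hQb1]
          rw [key]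
          rcases Nat.eq_or_lt_of_le hr_le with hr2N | hr2N
          · have hrbN : rb = N := by rw [← hbar_r, hr2N, barL_top N hN]
            rw [hr2N, lav_ge (2*N) _ _ le_rfl, hrbN, lav_ge N N _ le_rfl, hbp1]
          · have := ih r (by omega) (by omega) (by omega) (p+1) (by omega) (by omega)
            rw [this, hbar_r]

lemma eq_of_mod_zero (N x : ℕ) (hN : 0 < N) (h : x % N = 0) (h1 : 1 ≤ x) (h2 : x < 2*N) :
    x = N := by
  obtain ⟨c, hc⟩ := Nat.dvd_of_mod_eq_zero h
  rcases Nat.lt_or_ge c 2 with hcase | hcase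
  · interval_cases c <;> omega
  · exfalso
    have : N * 2 ≤ N * c := Nat.mul_le_mul_left N hcase
    omega

lemma dvd_bound_cases (d x : ℕ) (hd : 1 ≤ d) (h : d ∣ x) (h1 : 1 ≤ x) (h2 : x ≤ 2*d) :
    x = d ∨ x = 2*d := by
  obtain ⟨c, hc⟩ := h
  rcases Nat.lt_or_ge c 3 with hcase | hcase
  · interval_cases c <;> omega
  · exfalso
    have : d * 3 ≤ d * c := Nat.mul_le_mul_left d hcase
    omega

lemma pi_dvd_step (N : ℕ) (hN : 0 < N)
    (hF7 : ∀ p, 1 ≤ p → p < N → piL N p ∣ N) :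
    ∀ p, 1 ≤ p → p < 2*N → piL (2*N) p ∣ 2*N := by
  intro p hp1 hp2
  have hN2 : 0 < 2*N := by omega
  obtain ⟨hpi1, hpitop⟩ := piL_spec (2*N) p hp2
  have hpile : piL (2*N) p ≤ 2*N - p := piL_le (2*N) p hp2
  have proj : ∀ q, 1 ≤ q → q ≤ 2*N →
      lav (2*N) p q % N = lav N (barL N p) (barL N q) % N :=
    fun q h1 h2 => lav_proj N hN hF7 (2*N - p) p le_rfl hp1 (by omega) q h1 h2
  have hPb1 : 1 ≤ barL N p := barL_pos N p
  have hPb2 : barL N p ≤ N := barL_le N p hN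
  have hkey : lav N (barL N p) (barL N (piL (2*N) p)) % N = 0 := by
    rw [← proj _ hpi1 (by omega), hpitop, Nat.mul_mod_left]
  rcases Nat.eq_or_lt_of_le hPb2 with hP | hP
  · rw [hP, lav_ge N N _ le_rfl] at hkey
    have hb1 : 1 ≤ barL N (piL (2*N) p) := barL_pos N _
    have hb2 : barL N (piL (2*N) p) ≤ N := barL_le N _ hN
    have hbN : barL N (piL (2*N) p) = N := by
      rcases Nat.eq_or_lt_of_le hb2 with h | h
      · exact h
      · rw [Nat.mod_eq_of_lt h] at hkey; omega
    have hdvd : N ∣ piL (2*N) p := by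
      apply Nat.dvd_of_mod_eq_zero
      rw [← barL_mod N _ hN hpi1, hbN, Nat.mod_self]
    rcases dvd_bound_cases N (piL (2*N) p) hN hdvd hpi1 (by omega) with h | h
    · rw [h]; exact ⟨2, by ring⟩
    · rw [h]
  · obtain ⟨hπ1, hπtop⟩ := piL_spec N (barL N p) hP
    have hπle : piL N (barL N p) ≤ N - barL N p := piL_le N (barL N p) hP
    have hπN : piL N (barL N p) ∣ N := hF7 (barL N p) hPb1 hP
    have hVN : lav N (barL N p) (barL N (piL (2*N) p)) = N := by
      have hr := lav_range N (barL N p) (barL N (piL (2*N) p)) hPb1 (by omega)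
        (barL_pos N _) (barL_le N _ hN)
      rcases Nat.eq_or_lt_of_le hr.2 with h | h
      · exact h
      · rw [Nat.mod_eq_of_lt h] at hkey; omega
    have hdvd1 : piL N (barL N p) ∣ barL N (piL (2*N) p) :=
      lav_dvd_of_eq_top N (barL N p) hP (barL N (piL (2*N) p)) (barL_pos N _) hVN
    have hdvdπ : piL N (barL N p) ∣ piL (2*N) p := by
      apply Nat.dvd_of_mod_eq_zero
      rw [← Nat.mod_mod_of_dvd _ hπN, ← barL_mod N _ hN hpi1,
        Nat.mod_mod_of_dvd _ hπN]
      exact Nat.mod_eq_zero_of_dvd hdvd1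
    have h2πle : piL (2*N) p ≤ 2 * piL N (barL N p) := by
      by_contra hcon
      push_neg at hcon
      have hA : ∀ k, 1 ≤ k → k ≤ 2 → lav (2*N) p (k * piL N (barL N p)) = N := by
        intro k hk1 hk2
        have hk2π : k * piL N (barL N p) ≤ 2 * piL N (barL N p) :=
          Nat.mul_le_mul_right _ hk2
        have hk1' : 1 ≤ k * piL N (barL N p) := Nat.mul_le_mul hk1 hπ1
        have hk2N : k * piL N (barL N p) ≤ 2*N := by omega
        have hproj := proj (k * piL N (barL N p)) hk1' hk2N
        have hdvd2 : piL N (barL N p) ∣ barL N (k * piL N (barL N p)) := by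
          apply Nat.dvd_of_mod_eq_zero
          rw [← Nat.mod_mod_of_dvd _ hπN, barL_mod N _ hN hk1',
            Nat.mod_mod_of_dvd _ hπN, Nat.mul_mod_left]
        have htop : lav N (barL N p) (barL N (k * piL N (barL N p))) = N :=
          lav_eq_top_of_dvd N (barL N p) _ hP (barL_pos N _) hdvd2
        rw [htop, Nat.mod_self] at hproj
        have hrange := lav_range (2*N) p _ hp1 (by omega) hk1' hk2N
        have hne : lav (2*N) p (k * piL N (barL N p)) ≠ 2*N :=
          piL_min (2*N) p _ hk1' (by omega)
        exact eq_of_mod_zero N _ hN hproj hrange.1 (by omega)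
      have h1 := hA 1 le_rfl (by omega)
      have h2 := hA 2 (by omega) le_rfl
      have h1' : lav (2*N) p (piL N (barL N p)) = N := by simpa using h1
      have hmono := lav_mono (2*N) p hp2 (2 * piL N (barL N p)) (piL N (barL N p))
        hπ1 (by omega) (by omega)
      rw [h1', h2] at hmono
      exact lt_irrefl N hmono
    rcases dvd_bound_cases (piL N (barL N p)) (piL (2*N) p) (by omega) hdvdπ hpi1 h2πle with h | h
    · rw [h]; exact hπN.mul_left 2
    · rw [h]; exact mul_dvd_mul_left 2 hπN

lemma piL_dvd : ∀ n p, 1 ≤ p → p < 2^n → piL (2^n) p ∣ 2^n := by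
  intro n
  induction n with
  | zero => intro p h1 h2; omega
  | succ n ih =>
    intro p h1 h2
    have h2n : (2:ℕ)^(n+1) = 2 * 2^n := by rw [pow_succ]; ring
    rw [h2n] at h2 ⊢
    exact pi_dvd_step (2^n) (Nat.pow_pos (n := n) (by omega)) ih p h1 h2

lemma lav_topcol (n p : ℕ) (h1 : 1 ≤ p) (h2 : p ≤ 2^n) : lav (2^n) p (2^n) = 2^n :=
  lav_top (2^n) p (Nat.pow_pos (n := n) (by omega)) (piL_dvd n) h1 h2

lemma lav_axioms (n : ℕ) : LaverAxioms (2^n) (lav (2^n)) := by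
  have hN : 0 < 2^n := Nat.pow_pos (n := n) (by omega)
  refine ⟨?_, ?_, ?_⟩
  · rintro p q ⟨hp1, hp2⟩ ⟨hq1, hq2⟩
    exact lav_range (2^n) p q hp1 hp2 hq1 hq2
  · rintro p ⟨hp1, hp2⟩
    rcases Nat.eq_or_lt_of_le hp2 with h | h
    · rw [h, lav_ge _ _ _ le_rfl, Nat.mod_self]
    · rw [lav_one' _ p 1 h le_rfl, Nat.mod_eq_of_lt h]
  · rintro p q ⟨hp1, hp2⟩ ⟨hq1, hq2⟩
    rcases Nat.eq_or_lt_of_le hq2 with hq | hq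
    · -- q = 2^n
      rw [hq, lav_ge _ _ 1 le_rfl, lav_topcol n p hp1 hp2]
      rw [lav_ge _ _ _ le_rfl]
    · have hq1' : lav (2^n) q 1 = q + 1 := lav_one' _ q 1 hq le_rfl
      rw [hq1']
      rcases Nat.eq_or_lt_of_le hp2 with hp | hp
      · rw [hp, lav_ge _ _ (q+1) le_rfl, lav_ge _ _ q le_rfl, lav_ge _ _ 1 le_rfl,
          lav_one' _ q 1 hq le_rfl]
      · rw [lav_one' _ p 1 hp le_rfl]
        exact lav_rec (2^n) p q hp hq1

lemma lav_digit : ∀ n p, 1 ≤ p → p < 2^n → ∀ q, 1 ≤ q → q ≤ 2^n →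
    ∀ i, Nat.testBit p i = true → Nat.testBit (lav (2^n) p q - 1) i = true := by
  intro n
  induction n with
  | zero => intro p h1 h2; omega
  | succ n ih =>
    intro p h1 h2 q hq1 hq2 i hbit
    have hN : 0 < 2^n := Nat.pow_pos (n := n) (by omega)
    have h2n : (2:ℕ)^(n+1) = 2 * 2^n := by rw [pow_succ]; ring
    have hVgt : p < lav (2^(n+1)) p q := lav_gt _ (2^(n+1) - p) p le_rfl h2 q
    have hVle : lav (2^(n+1)) p q ≤ 2^(n+1) := lav_le _ (2^(n+1) - p) p le_rfl q hq1 hq2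
    rcases lt_trichotomy i n with hi | hi | hi
    · -- low bits : use projection
      have hproj : lav (2*2^n) p q % 2^n = lav (2^n) (barL (2^n) p) (barL (2^n) q) % 2^n :=
        lav_proj (2^n) hN (piL_dvd n) (2*2^n - p) p le_rfl h1 (by omega) q hq1 (by omega)
      rw [← h2n] at hproj
      have hPb2 : barL (2^n) p ≤ 2^n := barL_le _ p hN
      rcases Nat.eq_or_lt_of_le hPb2 with hP | hP
      · -- p ≡ 0 mod 2^n, so p = 2^n, low bits of p are 0
        exfalso
        have hp0 : p % 2^n = 0 := by rw [← barL_mod _ p hN h1, hP, Nat.mod_self]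
        have hpeq : p = 2^n := by
          have := eq_of_mod_zero (2^n) p hN hp0 h1 (by omega)
          exact this
        rw [hpeq, Nat.testBit_two_pow] at hbit
        simp at hbit
        omega
      · have hbitP : Nat.testBit (barL (2^n) p) i = true := by
          have hmodp : barL (2^n) p % 2^n = p % 2^n := barL_mod _ p hN h1
          have h3 : barL (2^n) p = p % 2^n := by
            rw [← hmodp, Nat.mod_eq_of_lt hP]
          rw [h3]
          rw [Nat.testBit_mod_two_pow]
          simp [hi, hbit]
        have hVr := lav_range (2^n) (barL (2^n) p) (barL (2^n) q)
          (barL_pos _ p) hPb2 (barL_pos _ q) (barL_le _ q hN)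
        have hIH := ih (barL (2^n) p) (barL_pos _ p) hP (barL (2^n) q)
          (barL_pos _ q) (barL_le _ q hN) i hbitP
        -- transfer: (V-1) % 2^n = (V'-1) % 2^n = V'-1
        have hsub := sub1_mod (2^n) (lav (2^(n+1)) p q) (lav (2^n) (barL (2^n) p) (barL (2^n) q))
          hN (by omega) hVr.1 hproj
        have hV'lt : lav (2^n) (barL (2^n) p) (barL (2^n) q) - 1 < 2^n := by omega
        have : Nat.testBit (lav (2^(n+1)) p q - 1) i
            = Nat.testBit ((lav (2^(n+1)) p q - 1) % 2^n) i := by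
          rw [Nat.testBit_mod_two_pow]; simp [hi]
        rw [this, hsub, Nat.mod_eq_of_lt hV'lt]
        exact hIH
    · -- top bit
      subst hi
      have hpge : 2^i ≤ p := by
        by_contra hcon
        push_neg at hcon
        rw [Nat.testBit_lt_two_pow hcon] at hbit
        exact Bool.noConfusion hbit
      have h4 : 2^i ≤ lav (2^(i+1)) p q - 1 := by omega
      have h5 : lav (2^(i+1)) p q - 1 < 2^(i+1) := by omega
      rw [Nat.testBit_eq_decide_div_mod_eq]
      have h6 : (lav (2^(i+1)) p q - 1) / 2^i = 1 := by
        apply Nat.div_eq_of_lt_le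
        · simpa using h4
        · have : 2 * 2^i = 2^(i+1) := by rw [pow_succ]; ring
          omega
      rw [h6]
      norm_num
    · -- i > n : impossible since p < 2^(n+1) ≤ 2^i
      exfalso
      have : p < 2^i := lt_of_lt_of_le h2 (Nat.pow_le_pow_right (by omega) (by omega))
      rw [Nat.testBit_lt_two_pow this] at hbit
      exact Bool.noConfusion hbit

lemma land_self_iff (x c : ℕ) :
    x &&& c = x ↔ ∀ i, x.testBit i = true → c.testBit i = true := by
  constructor
  · intro h i hx
    have h2 := congrArg (fun y => Nat.testBit y i) h
    simp only [Nat.testBit_land, hx, Bool.true_and] at h2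
    exact h2
  · intro h
    apply Nat.eq_of_testBit_eq
    intro i
    rw [Nat.testBit_land]
    cases hx : x.testBit i
    · simp
    · simp [h i hx]

lemma card_land_le : ∀ c, ((Finset.range (c+1)).filter (fun x => x &&& c = x)).card ≤
    2 ^ ((Nat.digits 2 c).count 1) := by
  intro c
  induction c using Nat.strong_induction_on with
  | _ c ih =>
    rcases Nat.eq_zero_or_pos c with rfl | hc
    · have : ((Finset.range 1).filter (fun x => x &&& 0 = x)) ⊆ {0} := by
        intro x hx
        simp [Finset.mem_filter, Finset.mem_range] at hx
        simp [hx.1]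
      calc ((Finset.range 1).filter (fun x => x &&& 0 = x)).card ≤ ({0} : Finset ℕ).card :=
            Finset.card_le_card this
        _ ≤ 2 ^ ((Nat.digits 2 0).count 1) := by simp
    · have hd : Nat.digits 2 c = (c % 2) :: Nat.digits 2 (c/2) :=
        Nat.digits_def' (by norm_num) hc
      rw [hd]
      have hinj : ((Finset.range (c+1)).filter (fun x => x &&& c = x)).card ≤
          (((Finset.range (c/2+1)).filter (fun x => x &&& (c/2) = x)) ×ˢ
            (Finset.range (c%2+1))).card := by
        apply Finset.card_le_card_of_injOn (fun x => (x/2, x%2))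
        · intro x hx
          simp only [Finset.mem_coe, Finset.mem_filter, Finset.mem_range, Finset.mem_product] at hx ⊢
          obtain ⟨hx1, hx2⟩ := hx
          have hsub := (land_self_iff x c).mp hx2
          have hxle : x ≤ c := by
            conv_lhs => rw [← hx2]
            exact Nat.and_le_right
          refine ⟨⟨?_, ?_⟩, ?_⟩
          · have := Nat.div_le_div_right (c := 2) hxle; omega
          · apply (land_self_iff _ _).mpr
            intro i hbit
            rw [Nat.testBit_div_two] at hbit ⊢
            exact hsub (i+1) hbit
          · rcases Nat.mod_two_eq_zero_or_one x with h | h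
            · omega
            · have hb0 : x.testBit 0 = true := by rw [Nat.testBit_zero]; simp [h]
              have := hsub 0 hb0
              rw [Nat.testBit_zero] at this
              simp at this
              omega
        · intro a ha b hb hab
          simp only [Prod.mk.injEq] at hab
          omega
      have hprod : (((Finset.range (c/2+1)).filter (fun x => x &&& (c/2) = x)) ×ˢ
          (Finset.range (c%2+1))).card =
          ((Finset.range (c/2+1)).filter (fun x => x &&& (c/2) = x)).card * (c%2+1) := by
        rw [Finset.card_product, Finset.card_range]
      have hih := ih (c/2) (by omega)
      have hcount : ((c % 2 :: Nat.digits 2 (c/2)).count 1) =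
          (Nat.digits 2 (c/2)).count 1 + (if c % 2 = 1 then 1 else 0) := by
        rw [List.count_cons]
        simp
      rw [hcount]
      rcases Nat.mod_two_eq_zero_or_one c with h2 | h2
      · rw [h2]; simp only [if_neg (by omega : ¬(0:ℕ) = 1)]
        calc _ ≤ _ := hinj
          _ = _ := hprod
          _ ≤ 2 ^ ((Nat.digits 2 (c/2)).count 1) * (c % 2 + 1) :=
              Nat.mul_le_mul_right _ hih
          _ ≤ 2 ^ ((Nat.digits 2 (c/2)).count 1 + 0) := by rw [h2]; simp
      · rw [h2]; simp only [if_pos rfl]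
        calc _ ≤ _ := hinj
          _ = _ := hprod
          _ ≤ 2 ^ ((Nat.digits 2 (c/2)).count 1) * (c % 2 + 1) :=
              Nat.mul_le_mul_right _ hih
          _ ≤ 2 ^ ((Nat.digits 2 (c/2)).count 1 + 1) := by rw [h2, pow_succ]

lemma bstar_eq (bstar : ℕ → ℕ → ℕ) (hb : IsBackLaver bstar) (n p q : ℕ)
    (hp : p < 2^n) (hq : q < 2^n) :
    bstar p q = 2^n - lav (2^n) (2^n - p) (2^n - q) :=
  hb n (lav (2^n)) (lav_axioms n) p q hp hq

lemma bstar_digit (bstar : ℕ → ℕ → ℕ) (hb : IsBackLaver bstar) (p : ℕ) (hp : 1 ≤ p) :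
    ∀ q, bstar p q &&& (p - 1) = bstar p q := by
  intro q
  set n := p + q + 1 with hn
  have hn2 : n < 2^n := Nat.lt_two_pow_self (n := n)
  have hp2 : p < 2^n := by omega
  have hq2 : q < 2^n := by omega
  set P := 2^n - p with hP
  set Q := 2^n - q with hQ
  have hP1 : 1 ≤ P := by omega
  have hPlt : P < 2^n := by omega
  have hQ1 : 1 ≤ Q := by omega
  have hQ2 : Q ≤ 2^n := by omega
  rw [bstar_eq bstar hb n p q hp2 hq2, ← hP, ← hQ]
  set V := lav (2^n) P Q with hV
  have hVgt : P < V := lav_gt (2^n) (2^n - P) P le_rfl hPlt Q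
  have hVle : V ≤ 2^n := lav_le (2^n) (2^n - P) P le_rfl Q hQ1 hQ2
  apply (land_self_iff _ _).mpr
  intro i hbit
  have hVm1 : V - 1 < 2^n := by omega
  have e1 : 2^n - V = 2^n - ((V-1)+1) := by omega
  rw [e1, Nat.testBit_two_pow_sub_succ hVm1 i] at hbit
  have e2 : p - 1 = 2^n - (P+1) := by omega
  rw [e2, Nat.testBit_two_pow_sub_succ hPlt i]
  simp only [Bool.and_eq_true, decide_eq_true_eq, Bool.not_eq_true'] at hbit ⊢
  refine ⟨hbit.1, ?_⟩
  cases hPb : Nat.testBit P i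
  · rfl
  · exfalso
    have := lav_digit n P hP1 hPlt Q hQ1 hQ2 i hPb
    rw [← hV] at this
    rw [this] at hbit
    exact Bool.noConfusion hbit.2

/-- for every p ≥ 1, the period π(p) (the smallest power of 2 which is a
period of q ↦ p * q) satisfies π(p) ≤ 2^{bit(p-1)}, where bit(m) is the number of ones
in the binary expansion of m. -/
theorem backLaver_period_le_bit (bstar : ℕ → ℕ → ℕ) (hb : IsBackLaver bstar) :
    ∀ p : ℕ, 1 ≤ p → ∀ π : ℕ, (∃ j, π = 2 ^ j) →
      (∀ q, bstar p (q + π) = bstar p q) →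
      (∀ s, (∃ j, s = 2 ^ j) → (∀ q, bstar p (q + s) = bstar p q) → π ≤ s) →
      π ≤ 2 ^ ((Nat.digits 2 (p - 1)).count 1) := by
  intro p hp π _ _ hmin
  set m := (Nat.digits 2 (p-1)).count 1 with hm
  apply hmin (2^m) ⟨m, rfl⟩
  intro q
  set s := 2^m with hs
  set n := p + q + s + 1 with hn
  have hn2 : n < 2^n := Nat.lt_two_pow_self (n := n)
  have hs1 : 1 ≤ s := Nat.pow_pos (n := m) (by omega)
  have hp2 : p < 2^n := by omega
  have hqs2 : q + s < 2^n := by omega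
  have hq2 : q < 2^n := by omega
  set P := 2^n - p with hP
  have hP1 : 1 ≤ P := by omega
  have hPlt : P < 2^n := by omega
  -- the forward period divides s = 2^m
  obtain ⟨hπ1, hπtop⟩ := piL_spec (2^n) P hPlt
  have hπle : piL (2^n) P ≤ 2^n - P := piL_le (2^n) P hPlt
  have hπdvd : piL (2^n) P ∣ 2^n := piL_dvd n P hP1 hPlt
  have hcard : piL (2^n) P ≤ 2^m := by
    have hmaps : ∀ j ∈ Finset.Icc 1 (piL (2^n) P),
        (2^n - lav (2^n) P j) ∈ (Finset.range p).filter (fun x => x &&& (p-1) = x) := by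
      intro j hj
      rw [Finset.mem_Icc] at hj
      have hjle : j ≤ 2^n := by omega
      have hval : 2^n - lav (2^n) P j = bstar p (2^n - j) := by
        have := bstar_eq bstar hb n p (2^n - j) hp2 (by omega)
        rw [this, ← hP]
        congr 2
        omega
      rw [hval]
      have hdig := bstar_digit bstar hb p hp (2^n - j)
      rw [Finset.mem_filter, Finset.mem_range]
      refine ⟨?_, hdig⟩
      have : bstar p (2^n - j) ≤ p - 1 := by
        conv_lhs => rw [← hdig]
        exact Nat.and_le_right
      omega
    have hinj : Set.InjOn (fun j => 2^n - lav (2^n) P j)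
        ↑(Finset.Icc 1 (piL (2^n) P)) := by
      intro a ha b hb' hab
      simp only [Finset.coe_Icc, Set.mem_Icc] at ha hb'
      by_contra hne
      rcases lt_or_gt_of_ne hne with h | h
      · have hlt := lav_mono (2^n) P hPlt b a ha.1 h hb'.2
        have hle1 : lav (2^n) P b ≤ 2^n := lav_le (2^n) (2^n - P) P le_rfl b (by omega) (by omega)
        simp only at hab
        omega
      · have hlt := lav_mono (2^n) P hPlt a b hb'.1 h ha.2
        have hle1 : lav (2^n) P a ≤ 2^n := lav_le (2^n) (2^n - P) P le_rfl a (by omega) (by omega)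
        simp only at hab
        omega
    have := Finset.card_le_card_of_injOn _ hmaps hinj
    rw [Nat.card_Icc] at this
    calc piL (2^n) P = piL (2^n) P + 1 - 1 := by omega
      _ ≤ ((Finset.range p).filter (fun x => x &&& (p-1) = x)).card := this
      _ ≤ 2^m := by
          have hh := card_land_le (p-1)
          have : p - 1 + 1 = p := by omega
          rw [this] at hh
          exact hh
  have hπs : piL (2^n) P ∣ s := by
    obtain ⟨k, hk, hkeq⟩ := (Nat.dvd_prime_pow Nat.prime_two).mp hπdvd
    have : (2:ℕ)^k ≤ 2^m := by rw [← hkeq]; exact hcard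
    have hkm : k ≤ m := (Nat.pow_le_pow_iff_right (by omega)).mp this
    rw [hkeq, hs]
    exact pow_dvd_pow 2 hkm
  obtain ⟨c, hc⟩ := hπs
  -- now conclude the periodicity of bstar p
  rw [bstar_eq bstar hb n p (q+s) hp2 hqs2, bstar_eq bstar hb n p q hp2 hq2, ← hP]
  have hper := lav_period_mul (2^n) P hPlt c (2^n - (q+s)) (by omega)
  have harg : 2^n - (q+s) + c * piL (2^n) P = 2^n - q := by
    have : c * piL (2^n) P = s := by rw [hc]; ring
    omega
  rw [harg] at hper
  rw [hper]
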